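/- arXiv:1908.05591 — 13 statements merged into one kernel-verified Lean document; each statement's English description precedes it below -/
import Mathlib

section
/- Every root Y in F_{q^3} of the polynomial h_1(X) = X^{q+1} + X + 1 satisfies N(Y) = 1 and N(Y+1) = -1, where N(A) = A^{1+q+q^2} is the norm from F_{q^3} to F_q. -/
theorem stmt_1 (q : ℕ) (hq : IsPrimePow q)
    (F : Type) [Field F] [Fintype F] (hcard : Fintype.card F = q ^ 3)
    (Y : F) (hY : Y ^ (q + 1) + Y + 1 = 0) :
    Y ^ (1 + q + q ^ 2) = 1 ∧ (Y + 1) ^ (1 + q + q ^ 2) = -1 := by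
  obtain ⟨p, k, hp, hk, rfl⟩ := hq
  haveI : Fact p.Prime := ⟨hp.nat_prime⟩
  -- F has characteristic p
  obtain ⟨n, hr, hcard'⟩ := FiniteField.card F (ringChar F)
  set r := ringChar F with hrdef
  haveI : Fact r.Prime := ⟨hr⟩
  have hrp : r = p := by
    have hdvd : r ∣ p ^ (k * 3) := by
      rw [pow_mul, ← hcard, hcard']
      exact dvd_pow_self r n.2.ne'
    have := hr.dvd_of_dvd_pow hdvd
    exact (Nat.prime_dvd_prime_iff_eq hr hp.nat_prime).mp this
  haveI hchar : CharP F p := hrp ▸ (inferInstance : CharP F r)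
  have hfa : ∀ x y : F, (x + y) ^ (p ^ k) = x ^ (p ^ k) + y ^ (p ^ k) :=
    fun x y => add_pow_char_pow x y p k
  have hQ0 : p ^ k ≠ 0 := pow_ne_zero k hp.nat_prime.pos.ne'
  have e1 : Y ^ (p ^ k) * Y + Y + 1 = 0 := by
    rw [pow_succ] at hY; exact hY
  have e2 : (Y ^ (p ^ k)) ^ (p ^ k) * Y ^ (p ^ k) + Y ^ (p ^ k) + 1 = 0 := by
    have h := congrArg (fun x : F => x ^ (p ^ k)) hY
    simp only [hfa, one_pow, zero_pow hQ0, pow_succ, mul_pow] at h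
    exact h
  have hy1 : (Y + 1) ^ (p ^ k) = Y ^ (p ^ k) + 1 := by rw [hfa, one_pow]
  have hy2 : (Y + 1) ^ ((p ^ k) ^ 2) = (Y ^ (p ^ k)) ^ (p ^ k) + 1 := by
    rw [sq, pow_mul, hy1, hfa, one_pow]
  constructor
  · rw [pow_add, pow_add, pow_one, sq, pow_mul]
    linear_combination Y * e2 - e1
  · rw [pow_add, pow_add, pow_one, hy1, hy2]
    linear_combination ((Y ^ (p ^ k)) ^ (p ^ k) + 1) * e1 + e2
end

section
/- Every root Y in F_{q^3} of the polynomial h_2(X) = X^{q+1} + X^q + 1 satisfies N(Y) = 1 and N(Y+1) = -1, where N(A) = A^{1+q+q^2}. -/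
theorem stmt_2 (q : ℕ) (hq : IsPrimePow q)
    (F : Type) [Field F] [Fintype F] (hcard : Fintype.card F = q ^ 3)
    (Y : F) (hY : Y ^ (q + 1) + Y ^ q + 1 = 0) :
    Y ^ (1 + q + q ^ 2) = 1 ∧ (Y + 1) ^ (1 + q + q ^ 2) = -1 := by
  obtain ⟨p, k, hp, hk, rfl⟩ := hq
  have hpp : p.Prime := hp.nat_prime
  haveI : Fact p.Prime := ⟨hpp⟩
  -- characteristic of F is p
  have hpr : (ringChar F).Prime := CharP.char_is_prime F (ringChar F)
  obtain ⟨m, _, he⟩ := FiniteField.card F (ringChar F)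
  have hpe : p = ringChar F := by
    have hdvd : p ∣ (ringChar F) ^ (m : ℕ) := by
      rw [← he, hcard, ← pow_mul]
      exact dvd_pow_self p (by positivity)
    exact ((Nat.prime_dvd_prime_iff_eq hpp hpr).mp (hpp.dvd_of_dvd_pow hdvd))
  haveI hcharp : CharP F p := hpe ▸ ringChar.charP F
  set q := p ^ k with hqdef
  -- key facts
  have hadd : ∀ x y : F, (x + y) ^ q = x ^ q + y ^ q := fun x y =>
    add_pow_char_pow x y p k
  have hneg : (-1 : F) ^ q = -1 := neg_one_pow_char_pow F p k
  -- E1 : Y^q * (Y+1) = -1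
  have E1 : Y ^ q * (Y + 1) = -1 := by
    have : Y ^ (q + 1) = Y ^ q * Y := by rw [pow_succ]
    linear_combination hY - this
  -- apply frobenius to E1
  have E2 : (Y ^ q) ^ q * (Y ^ q + 1) = -1 := by
    have := congrArg (· ^ q) E1
    simp only [mul_pow, hadd Y 1, one_pow, hneg] at this
    exact this
  have hY0 : Y ≠ 0 := by
    rintro rfl
    rw [zero_pow (Nat.succ_ne_zero q), zero_pow (pow_pos hpp.pos k).ne', zero_add, zero_add] at hY
    exact one_ne_zero hY
  set a := Y ^ q with ha
  set b := a ^ q with hb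
  have key1 : (Y * a * b) * Y = 1 * Y := by
    rw [one_mul]; linear_combination (Y * b) * E1 - Y * E2
  have key1' : Y * a * b = 1 := mul_right_cancel₀ hY0 key1
  have key2 : (Y + 1) * (a + 1) * (b + 1) = -1 := by
    linear_combination E1 + (Y + 1) * E2
  have hpow : ∀ x : F, x ^ (1 + q + q ^ 2) = x * x ^ q * (x ^ q) ^ q := by
    intro x
    rw [pow_add, pow_add, pow_one, sq, pow_mul]
  constructor
  · rw [hpow, ← ha, ← hb]; exact key1'
  · rw [hpow, hadd Y 1, one_pow, ← ha, hadd a 1, one_pow, ← hb]; exact key2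
end

section
/- Let A ∈ F_{q^3} satisfy N(A) = 1 and A ≠ 1, where N(A) = A^{1+q+q^2}. Then A_1 := (A^{q+1} − 1)/(1 − A^q) is a root of h_1(X) = X^{q+1} + X + 1. (In particular 1 − A^q ≠ 0.) -/
/-!
With `σ` the `q`-power Frobenius of `𝔽_{q^3}`, the norm condition reads `A · σA · σ²A = 1`,
and `A₁ ^ (q + 1) = σ(A₁) · A₁`. Clearing the denominators `(1 - σA)(1 - σ²A)`, the equation
`σ(A₁) · A₁ + A₁ + 1 = 0` becomes a polynomial identity modulo `A · σA · σ²A = 1`, so it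
holds for any ring endomorphism `σ` of a field. The denominators are nonzero because `σ` is
injective.
-/

namespace RingHom

variable {K : Type*} [Field K]

theorem one_sub_map_ne_zero {L : Type*} [DivisionRing L] (σ : L →+* K) {A : L} (hA : A ≠ 1) :
    1 - σ A ≠ 0 := by
  rw [sub_ne_zero, ne_comm, ← map_one σ]
  exact σ.injective.ne hA

theorem map_mul_add_add_one_eq_zero (σ : K →+* K) {A : K} (hA : A * σ A * σ (σ A) = 1)
    (hA1 : A ≠ 1) :
    σ ((σ A * A - 1) / (1 - σ A)) * ((σ A * A - 1) / (1 - σ A)) +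
      (σ A * A - 1) / (1 - σ A) + 1 = 0 := by
  have hσA : 1 - σ A ≠ 0 := σ.one_sub_map_ne_zero hA1
  have hσσA : 1 - σ (σ A) ≠ 0 :=
    σ.one_sub_map_ne_zero fun h ↦ hA1 (σ.injective (h.trans σ.map_one.symm))
  simp only [map_div₀, map_sub, map_mul, map_one]
  field_simp
  linear_combination (σ A - 1) * hA

end RingHom

theorem FiniteField.exists_eq_pow_of_card_eq_pow {F : Type*} [Field F] [Fintype F] (p : ℕ)
    [CharP F p] {q m : ℕ} (hm : m ≠ 0) (hcard : Fintype.card F = q ^ m) : ∃ i, q = p ^ i := by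
  obtain ⟨n, hp, hpn⟩ := FiniteField.card F p
  obtain ⟨i, -, hi⟩ := (Nat.dvd_prime_pow hp).mp (hpn ▸ hcard ▸ dvd_pow_self q hm)
  exact ⟨i, hi⟩

theorem stmt_5_general (q : ℕ)
    (F : Type) [Field F] [Fintype F] (hcard : Fintype.card F = q ^ 3)
    (A : F) (hA : A ^ (1 + q + q ^ 2) = 1) (hA1 : A ≠ 1) :
    1 - A ^ q ≠ 0 ∧
    ((A ^ (q + 1) - 1) / (1 - A ^ q)) ^ (q + 1) +
      (A ^ (q + 1) - 1) / (1 - A ^ q) + 1 = 0 := by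
  obtain ⟨p, _, -, hp, -⟩ := FiniteField.card' F
  have : Fact p.Prime := ⟨hp⟩
  obtain ⟨i, rfl⟩ := FiniteField.exists_eq_pow_of_card_eq_pow p three_ne_zero hcard
  let σ := iterateFrobenius F p i
  have hσ : ∀ x, σ x = x ^ p ^ i := fun _ ↦ rfl
  have hnorm : A * σ A * σ (σ A) = 1 := by
    rw [hσ, hσ, ← hA]
    ring
  refine ⟨σ.one_sub_map_ne_zero hA1, ?_⟩
  simpa only [hσ, pow_succ] using σ.map_mul_add_add_one_eq_zero hnorm hA1

theorem stmt_5 (q : ℕ) (hq : IsPrimePow q)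
    (F : Type) [Field F] [Fintype F] (hcard : Fintype.card F = q ^ 3)
    (A : F) (hA : A ^ (1 + q + q ^ 2) = 1) (hA1 : A ≠ 1) :
    1 - A ^ q ≠ 0 ∧
    ((A ^ (q + 1) - 1) / (1 - A ^ q)) ^ (q + 1) +
      (A ^ (q + 1) - 1) / (1 - A ^ q) + 1 = 0 :=
  stmt_5_general q F hcard A hA hA1
end

section
/- Let A ∈ F_{q^3} satisfy N(A) = 1 and A ≠ 1. Then A_2 := (A − A^{q+1})/(A^{q+1} − 1) is a root of h_2(X) = X^{q+1} + X^q + 1, and (A^{q+1} − 1)/(1 − A^q) · A_2 = A. -/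
/-! Write `σ` for the `q`-power Frobenius, so that `A ^ (q + 1) = A * σ A` and the norm condition
reads `A * σ A * σ² A = 1`. Then `A₂ = (A * σ² A - 1) / (1 - σ² A)` and
`σ A₂ = (A * σ A - 1) / (1 - A)`, and `σ A₂ * (A₂ + 1) = -1` is a direct computation. -/

section NormOne

variable {K : Type*} [Field K] (σ : K →+* K) {A : K}

theorem mul_map_ne_one_of_norm_eq_one (hN : A * σ A * σ (σ A) = 1) (hA : A ≠ 1) :
    A * σ A ≠ 1 := by
  intro h
  have hC : σ (σ A) = 1 := by rw [← hN, h, one_mul]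
  exact hA (σ.injective (σ.injective (by simp [hC])))

theorem root_of_norm_eq_one (hN : A * σ A * σ (σ A) = 1) (hA : A ≠ 1) :
    (A - A * σ A) / (A * σ A - 1) * σ ((A - A * σ A) / (A * σ A - 1)) +
      σ ((A - A * σ A) / (A * σ A - 1)) + 1 = 0 := by
  have hAB : A * σ A - 1 ≠ 0 := sub_ne_zero.mpr (mul_map_ne_one_of_norm_eq_one σ hN hA)
  have hBC : σ A * σ (σ A) - 1 ≠ 0 := fun h => hA (by linear_combination hN - A * h)
  simp only [map_div₀, map_sub, map_mul, map_one]
  field_simp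
  linear_combination (σ A - 1) * hN

end NormOne

theorem stmt_6 (q : ℕ) (hq : IsPrimePow q)
    (F : Type) [Field F] [Fintype F] (hcard : Fintype.card F = q ^ 3)
    (A : F) (hA : A ^ (1 + q + q ^ 2) = 1) (hA1 : A ≠ 1) :
    ((A - A ^ (q + 1)) / (A ^ (q + 1) - 1)) ^ (q + 1) +
      ((A - A ^ (q + 1)) / (A ^ (q + 1) - 1)) ^ q + 1 = 0 ∧
    (A ^ (q + 1) - 1) / (1 - A ^ q) * ((A - A ^ (q + 1)) / (A ^ (q + 1) - 1)) = A := by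
  obtain ⟨p, k, hp, -, rfl⟩ := hq
  have : Fact p.Prime := ⟨hp.nat_prime⟩
  have : CharP F p := charP_of_card_eq_prime_pow (f := k * 3) (by rw [hcard, pow_mul])
  set σ := iterateFrobenius F p k
  have hσ (x : F) : x ^ p ^ k = σ x := (iterateFrobenius_def p k x).symm
  have hN : A * σ A * σ (σ A) = 1 := by
    rw [← hA, ← hσ, ← hσ]
    ring
  have hB : 1 - σ A ≠ 0 := sub_ne_zero.mpr fun h => hA1 (σ.injective (by rw [← h, map_one]))
  have hAB : A * σ A - 1 ≠ 0 := sub_ne_zero.mpr (mul_map_ne_one_of_norm_eq_one σ hN hA1)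
  simp only [pow_succ', hσ]
  refine ⟨by linear_combination root_of_norm_eq_one σ hN hA1, ?_⟩
  field_simp
end

section
/- Let A ∈ F_{q^3} with N(A) = 1 and A ≠ 1, and suppose A = A_1 · A_2 where A_1 is a root of h_1(X) = X^{q+1} + X + 1 and A_2 is a root of h_2(X) = X^{q+1} + X^q + 1. Then necessarily A_1 = (A^{q+1} − 1)/(1 − A^q) and A_2 = (A − A^{q+1})/(A^{q+1} − 1). -/
theorem stmt_7 (q : ℕ) (hq : IsPrimePow q)
    (F : Type) [Field F] [Fintype F] (hcard : Fintype.card F = q ^ 3)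
    (A A₁ A₂ : F) (hA : A ^ (1 + q + q ^ 2) = 1) (hAne : A ≠ 1)
    (hprod : A = A₁ * A₂)
    (h1 : A₁ ^ (q + 1) + A₁ + 1 = 0)
    (h2 : A₂ ^ (q + 1) + A₂ ^ q + 1 = 0) :
    A₁ = (A ^ (q + 1) - 1) / (1 - A ^ q) ∧
    A₂ = (A - A ^ (q + 1)) / (A ^ (q + 1) - 1) := by
  subst hprod
  rw [pow_succ] at h1 h2
  set a := A₁ ^ q with ha
  set b := A₂ ^ q with hb
  have hpow : (A₁ * A₂) ^ q = a * b := mul_pow A₁ A₂ q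
  have hpow1 : (A₁ * A₂) ^ (q + 1) = a * b * (A₁ * A₂) := by
    rw [pow_succ, hpow]
  rw [hpow, hpow1]
  have hd1 : 1 - a * b ≠ 0 := by
    intro h
    exact hAne (by linear_combination (-1 : F) * h1 + a * A₁ * h2 + A₁ * (A₂ + 1) * h)
  have hd2 : a * b * (A₁ * A₂) - 1 ≠ 0 := by
    intro h
    exact hAne (by linear_combination A₂ * h1 + (-(a * A₁ * A₂)) * h2 + (A₂ + 1) * h)
  constructor
  · rw [eq_div_iff hd1]
    linear_combination h1 - a * A₁ * h2
  · rw [eq_div_iff hd2]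
    linear_combination (-A₂) * h1 + a * A₁ * A₂ * h2
end

section
/- Let H_1, H_2 ⊆ F_{q^3} be the root sets of h_1(X) = X^{q+1} + X + 1 and h_2(X) = X^{q+1} + X^q + 1 respectively. Then H_1 ∩ H_2 = {Y ∈ F_q : Y^2 + Y + 1 = 0}. In particular H_1 ∩ H_2 = {1} if 3 | q, H_1 ∩ H_2 = {α, α^{-1}} for a primitive cube root of unity α if q ≡ 1 (mod 3), and H_1 ∩ H_2 = ∅ if q ≡ 2 (mod 3). -/
theorem stmt_8 (q : ℕ) (hq : IsPrimePow q)
    (F : Type) [Field F] [Fintype F] (hcard : Fintype.card F = q ^ 3) :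
    ({Y : F | Y ^ (q + 1) + Y + 1 = 0} ∩ {Y : F | Y ^ (q + 1) + Y ^ q + 1 = 0}
      = {Y : F | Y ^ q = Y ∧ Y ^ 2 + Y + 1 = 0}) ∧
    (3 ∣ q →
      {Y : F | Y ^ (q + 1) + Y + 1 = 0} ∩ {Y : F | Y ^ (q + 1) + Y ^ q + 1 = 0} = {1}) ∧
    (q % 3 = 1 → ∃ α : F, α ^ 3 = 1 ∧ α ≠ 1 ∧
      {Y : F | Y ^ (q + 1) + Y + 1 = 0} ∩ {Y : F | Y ^ (q + 1) + Y ^ q + 1 = 0}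
        = {α, α⁻¹}) ∧
    (q % 3 = 2 →
      {Y : F | Y ^ (q + 1) + Y + 1 = 0} ∩ {Y : F | Y ^ (q + 1) + Y ^ q + 1 = 0} = ∅) := by
  classical
  obtain ⟨r, k, hr, hk, hrk⟩ := hq
  have hr' : Nat.Prime r := hr.nat_prime
  have hq2 : 2 ≤ q := by
    calc 2 ≤ r := hr'.two_le
    _ ≤ r ^ k := Nat.le_self_pow (by omega) r
    _ = q := hrk
  -- characteristic facts
  obtain ⟨n, hp, hcardn⟩ := FiniteField.card F (ringChar F)
  have hchar : (3 : F) = 0 ↔ 3 ∣ q := by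
    constructor
    · intro h3
      have hdvd : ringChar F ∣ 3 :=
        (CharP.cast_eq_zero_iff F (ringChar F) 3).mp h3
      have hp3 : ringChar F = 3 :=
        (Nat.prime_dvd_prime_iff_eq hp Nat.prime_three).mp hdvd
      have h1 : q ^ 3 = 3 ^ (n : ℕ) := by rw [← hcard, hcardn, hp3]
      have h2 : 3 ∣ q ^ 3 := by
        rw [h1]; exact dvd_pow_self 3 (by exact_mod_cast n.pos.ne')
      exact Nat.Prime.dvd_of_dvd_pow Nat.prime_three h2
    · intro h3
      have h1 : (3 : ℕ) ∣ ringChar F ^ (n : ℕ) := by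
        rw [← hcardn, hcard]; exact dvd_pow h3 (by norm_num)
      have h2 : (3 : ℕ) ∣ ringChar F := Nat.Prime.dvd_of_dvd_pow Nat.prime_three h1
      have hp3 : ringChar F = 3 :=
        ((Nat.prime_dvd_prime_iff_eq Nat.prime_three hp).mp h2).symm
      have := CharP.cast_eq_zero F (ringChar F)
      rwa [hp3] at this
  -- main set equality
  have hmain : {Y : F | Y ^ (q + 1) + Y + 1 = 0} ∩ {Y : F | Y ^ (q + 1) + Y ^ q + 1 = 0}
      = {Y : F | Y ^ q = Y ∧ Y ^ 2 + Y + 1 = 0} := by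
    ext Y
    simp only [Set.mem_inter_iff, Set.mem_setOf_eq]
    constructor
    · rintro ⟨h1, h2⟩
      have hy : Y ^ q = Y := by linear_combination h2 - h1
      have e : Y ^ (q + 1) = Y ^ 2 := by rw [pow_succ, hy, sq]
      rw [e] at h1
      exact ⟨hy, h1⟩
    · rintro ⟨hy, h2⟩
      have e : Y ^ (q + 1) = Y ^ 2 := by rw [pow_succ, hy, sq]
      exact ⟨by rw [e]; exact h2, by rw [e, hy]; exact h2⟩
  refine ⟨hmain, ?_, ?_, ?_⟩
  · -- 3 ∣ q
    intro h3
    have h3F : (3 : F) = 0 := hchar.mpr h3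
    rw [hmain]
    ext Y
    simp only [Set.mem_setOf_eq, Set.mem_singleton_iff]
    constructor
    · rintro ⟨hy, hY⟩
      have hsq : (Y - 1) ^ 2 = 0 := by linear_combination hY - Y * h3F
      have := pow_eq_zero_iff (n := 2) (by norm_num) |>.mp hsq
      exact sub_eq_zero.mp this
    · rintro rfl
      refine ⟨one_pow q, ?_⟩
      linear_combination h3F
  · -- q % 3 = 1
    intro hq1
    have hdvd : 3 ∣ Fintype.card Fˣ := by
      rw [Fintype.card_units, hcard]
      have h1 : q ^ 3 % 3 = 1 := by
        rw [Nat.pow_mod, hq1]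
      have h2 : 1 ≤ q ^ 3 := Nat.one_le_pow _ _ (by omega)
      omega
    haveI : Fact (Nat.Prime 3) := ⟨Nat.prime_three⟩
    obtain ⟨u, hu⟩ := exists_prime_orderOf_dvd_card 3 hdvd
    set α : F := (u : F) with hα
    have hα3 : α ^ 3 = 1 := by
      have : (u : F) ^ 3 = ((u ^ 3 : Fˣ) : F) := by push_cast; ring
      rw [hα, this, ← hu, pow_orderOf_eq_one u, Units.val_one]
    have hα1 : α ≠ 1 := by
      intro h
      have : u = 1 := Units.val_eq_one.mp h
      rw [this, orderOf_one] at hu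
      omega
    have hα0 : α ≠ 0 := u.ne_zero
    have hα2 : α ^ 2 + α + 1 = 0 := by
      have hfac : (α - 1) * (α ^ 2 + α + 1) = 0 := by linear_combination hα3
      rcases mul_eq_zero.mp hfac with h | h
      · exact absurd (sub_eq_zero.mp h) hα1
      · exact h
    have hinv : α⁻¹ = α ^ 2 := by
      apply inv_eq_of_mul_eq_one_right
      linear_combination hα3
    have hαq : α ^ q = α := by
      have hqe : q = 3 * (q / 3) + 1 := by omega
      rw [hqe, pow_succ, pow_mul, hα3, one_pow, one_mul]
    refine ⟨α, hα3, hα1, ?_⟩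
    rw [hmain]
    ext Y
    simp only [Set.mem_setOf_eq, Set.mem_insert_iff, Set.mem_singleton_iff]
    constructor
    · rintro ⟨hy, hY⟩
      have hfac : (Y - α) * (Y - α ^ 2) = 0 := by
        linear_combination hY - Y * hα2 + hα3
      rcases mul_eq_zero.mp hfac with h | h
      · exact Or.inl (sub_eq_zero.mp h)
      · exact Or.inr (by rw [hinv]; exact sub_eq_zero.mp h)
    · rintro (rfl | rfl)
      · exact ⟨hαq, hα2⟩
      · rw [hinv]
        constructor
        · rw [← pow_mul, mul_comm, pow_mul, hαq]
        · linear_combination α * hα3 + hα2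
  · -- q % 3 = 2
    intro hq2'
    rw [hmain]
    ext Y
    simp only [Set.mem_setOf_eq, Set.mem_empty_iff_false, iff_false, not_and]
    intro hy hY
    have hY0 : Y ≠ 0 := by
      rintro rfl
      simp at hY
    have hY3 : Y ^ 3 = 1 := by linear_combination (Y - 1) * hY
    have hqe : q = 3 * (q / 3) + 2 := by omega
    have hYq : Y ^ q = Y ^ 2 := by
      rw [hqe, pow_add, pow_mul, hY3, one_pow, one_mul]
    rw [hYq] at hy
    have hfac : Y * (Y - 1) = 0 := by linear_combination hy
    rcases mul_eq_zero.mp hfac with h | h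
    · exact hY0 h
    · have hY1 : Y = 1 := sub_eq_zero.mp h
      rw [hY1] at hY
      have h3F : (3 : F) = 0 := by linear_combination hY
      have := hchar.mp h3F
      omega
end

section
/- Let q be a prime power with char F_q ≠ 2 and A ∈ F_{q^3} with N(A) = 1. Then A = B·C with B ≠ C both roots of h_1(X) = X^{q+1} + X + 1 if and only if (A + 1 − A^{q+1})^2 − 4A is a nonzero square in F_{q^3}. -/
theorem stmt_11 (q : ℕ) (hq : IsPrimePow q)
    (F : Type) [Field F] [Fintype F] (hcard : Fintype.card F = q ^ 3)
    (hchar : ringChar F ≠ 2)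
    (A : F) (hA : A ^ (1 + q + q ^ 2) = 1) :
    (∃ B C : F, B ≠ C ∧ B ^ (q + 1) + B + 1 = 0 ∧ C ^ (q + 1) + C + 1 = 0 ∧
        A = B * C) ↔
      ∃ G : F, G ≠ 0 ∧ (A + 1 - A ^ (q + 1)) ^ 2 - 4 * A = G ^ 2 := by
  obtain ⟨p, k, hp, hk, hpk⟩ := hq
  have hp' := hp.nat_prime
  have hq0 : q ≠ 0 := by rw [← hpk]; exact pow_ne_zero k hp'.pos.ne'
  haveI : CharP F (ringChar F) := ringChar.charP F
  have hrp : (ringChar F).Prime := CharP.char_is_prime F (ringChar F)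
  obtain ⟨n, hn⟩ := FiniteField.card F (ringChar F)
  have hrq : ringChar F = p := by
    have hd : p ∣ ringChar F ^ (n : ℕ) := by
      rw [← hn.2, hcard, ← hpk]
      exact dvd_pow (dvd_pow_self p hk.ne') (by norm_num)
    exact ((Nat.prime_dvd_prime_iff_eq hp' hrp).mp (hp'.dvd_of_dvd_pow hd)).symm
  haveI hCp : CharP F p := hrq ▸ ringChar.charP F
  haveI : Fact p.Prime := ⟨hp'⟩
  haveI : ExpChar F p := ExpChar.prime hp'
  have hfadd : ∀ x y : F, (x + y) ^ q = x ^ q + y ^ q := by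
    intro x y; rw [← hpk]; exact add_pow_char_pow x y p k
  have hfsub : ∀ x y : F, (x - y) ^ q = x ^ q - y ^ q := by
    intro x y; rw [← hpk]; exact sub_pow_char_pow x y k
  have hq3 : ∀ z : F, z ^ (q * (q * q)) = z := by
    intro z
    have h := FiniteField.pow_card z
    rwa [hcard, show q ^ 3 = q * (q * q) by ring] at h
  have hA0 : A ≠ 0 := by
    intro h
    rw [h, zero_pow (by positivity)] at hA
    exact zero_ne_one hA
  have hN : A * (A ^ (q + 1)) ^ q = 1 := by
    rw [← pow_mul, ← pow_succ', show (q + 1) * q + 1 = 1 + q + q ^ 2 by ring]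
    exact hA
  constructor
  · rintro ⟨B, C, hne, hB, hC, rfl⟩
    refine ⟨B - C, sub_ne_zero.mpr hne, ?_⟩
    have hB' : B ^ (q + 1) = -B - 1 := by linear_combination hB
    have hC' : C ^ (q + 1) = -C - 1 := by linear_combination hC
    rw [mul_pow, hB', hC']; ring
  · rintro ⟨G, hG0, hG⟩
    have h2 : (2 : F) ≠ 0 := by
      intro h
      have hd : ringChar F ∣ 2 := ringChar.dvd (by exact_mod_cast h)
      exact hchar ((Nat.prime_dvd_prime_iff_eq hrp Nat.prime_two).mp hd)
    set B : F := (A ^ (q + 1) - A - 1 + G) / 2 with hBdef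
    set C : F := (A ^ (q + 1) - A - 1 - G) / 2 with hCdef
    have hsum : B + C = A ^ (q + 1) - A - 1 := by
      rw [hBdef, hCdef]; field_simp; ring
    have hdiff : B - C = G := by
      rw [hBdef, hCdef]; field_simp; ring
    have hBC : B * C = A := by
      rw [hBdef, hCdef, div_mul_div_comm, div_eq_iff (mul_ne_zero h2 h2)]
      linear_combination hG
    have hne : B ≠ C := by
      intro h; apply hG0; rw [← hdiff, h, sub_self]
    have hAq : B ^ q * C ^ q = A ^ q := by rw [← mul_pow, hBC]
    have hR2 : B + C = A * (B ^ q * C ^ q) - A - 1 := by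
      rw [hAq, hsum]; ring
    have e1 : B ^ q + C ^ q = (A ^ (q + 1)) ^ q - A ^ q - 1 := by
      rw [← hfadd, hsum, hfsub, hfsub, one_pow]
    have hR3 : A * (B ^ q + C ^ q) = 1 - A * (B ^ q * C ^ q) - A := by
      rw [e1, hAq]
      linear_combination hN
    have I1 : (B ^ q * B + B + 1) * (B ^ q * C + C + 1) = 0 := by
      linear_combination (B ^ q + 1) ^ 2 * hBC + (B ^ q + 1) * hR2 + B ^ q * hR3
    have I2 : (C ^ q * B + B + 1) * (C ^ q * C + C + 1) = 0 := by
      linear_combination (C ^ q + 1) ^ 2 * hBC + (C ^ q + 1) * hR2 + C ^ q * hR3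
    have hB0 : B ≠ 0 := by intro h; apply hA0; rw [← hBC, h, zero_mul]
    have hC0 : C ≠ 0 := by intro h; apply hA0; rw [← hBC, h, mul_zero]
    have hGq0 : B ^ q - C ^ q ≠ 0 := by
      rw [← hfsub, hdiff]; exact pow_ne_zero q hG0
    rcases mul_eq_zero.mp I1 with hu | hv'
    · rcases mul_eq_zero.mp I2 with hu' | hv
      · exfalso
        have hb : (B ^ q - C ^ q) * B = 0 := by linear_combination hu - hu'
        exact hGq0 ((mul_eq_zero.mp hb).resolve_right hB0)
      · exact ⟨B, C, hne, by rw [pow_succ]; linear_combination hu,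
          by rw [pow_succ]; linear_combination hv, hBC.symm⟩
    · exfalso
      rcases mul_eq_zero.mp I2 with hu' | hv
      · -- bad pairing case
        have h3 : (C ^ q) ^ q * B ^ q + B ^ q + 1 = 0 := by
          have h : (C ^ q * B + B + 1) ^ q = 0 := by rw [hu', zero_pow hq0]
          rwa [hfadd, hfadd, mul_pow, one_pow] at h
        have h2a : (B ^ q) ^ q * C ^ q + C ^ q + 1 = 0 := by
          have h : (B ^ q * C + C + 1) ^ q = 0 := by rw [hv', zero_pow hq0]
          rwa [hfadd, hfadd, mul_pow, one_pow] at h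
        have h2b : B * (C ^ q) ^ q + (C ^ q) ^ q + 1 = 0 := by
          have h : ((B ^ q) ^ q * C ^ q + C ^ q + 1) ^ q = 0 := by
            rw [h2a, zero_pow hq0]
          rw [hfadd, hfadd, mul_pow, one_pow] at h
          have hB3 : (((B ^ q) ^ q) ^ q) = B := by
            rw [← pow_mul, ← pow_mul]; exact hq3 B
          rwa [hB3] at h
        have hu : B ^ q * B + B + 1 = 0 := by
          linear_combination (B + 1) * h3 - B ^ q * h2b
        have hb : (B ^ q - C ^ q) * B = 0 := by linear_combination hu - hu'
        exact hGq0 ((mul_eq_zero.mp hb).resolve_right hB0)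
      · have hc : (B ^ q - C ^ q) * C = 0 := by linear_combination hv' - hv
        exact hGq0 ((mul_eq_zero.mp hc).resolve_right hC0)
end

section
/- Let q be a prime power with char F_q ≠ 2 and suppose D := (A + 1 − A^{q+1})^2 − 4A = G^2 for some nonzero G ∈ F_{q^3}, where N(A) = 1. Then G^q = G/A, i.e., the q-th power of any square root of D equals that square root divided by A. -/
theorem stmt_12 (q : ℕ) (hq : IsPrimePow q)
    (F : Type) [Field F] [Fintype F] (hcard : Fintype.card F = q ^ 3)
    (hchar : ringChar F ≠ 2)
    (A G : F) (hA : A ^ (1 + q + q ^ 2) = 1) (hG : G ≠ 0)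
    (hD : (A + 1 - A ^ (q + 1)) ^ 2 - 4 * A = G ^ 2) :
    G ^ q = G / A := by
  obtain ⟨p, k, hp, hk, rfl⟩ := hq
  have hpN : p.Prime := hp.nat_prime
  haveI : Fact p.Prime := ⟨hpN⟩
  haveI : CharP F (ringChar F) := ringChar.charP F
  have hrP : (ringChar F).Prime := CharP.char_is_prime F (ringChar F)
  haveI : Fact (ringChar F).Prime := ⟨hrP⟩
  obtain ⟨n, -, hcard'⟩ := FiniteField.card F (ringChar F)
  have hpr : p = ringChar F := by
    have hd : p ∣ (ringChar F) ^ (n : ℕ) := by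
      rw [← hcard', hcard]
      exact dvd_pow (dvd_pow_self p hk.ne') three_ne_zero
    exact ((Nat.prime_dvd_prime_iff_eq hpN hrP).mp (hpN.dvd_of_dvd_pow hd))
  haveI : CharP F p := hpr ▸ ringChar.charP F
  set q := p ^ k with hqdef
  -- the q-power Frobenius
  set φ : F →+* F := iterateFrobenius F p k with hφdef
  have hφ : ∀ x : F, φ x = x ^ q := fun x => rfl
  have hA0 : A ≠ 0 := by
    intro h
    rw [h, zero_pow] at hA
    · exact zero_ne_one hA
    · positivity
  set B := A ^ q with hB
  set C := A ^ (q * q) with hC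
  have hABC : A * B * C = 1 := by
    rw [hB, hC, ← hA, pow_add, pow_add, pow_one, sq]
  have hB0 : B ≠ 0 := pow_ne_zero _ hA0
  have hC0 : C ≠ 0 := pow_ne_zero _ hA0
  have hφA : φ A = B := hφ A
  have hφB : φ B = C := by rw [hφ, hB, ← pow_mul]
  have hφC : φ C = A := by
    rw [hφ, hC, ← pow_mul]
    have : q * q * q = Fintype.card F := by rw [hcard]; ring
    rw [this, FiniteField.pow_card]
  have hq1 : A ^ (q + 1) = A * B := by rw [pow_add, pow_one, hB, mul_comm]
  rw [hq1] at hD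
  -- apply Frobenius to hD
  have hD2 : (B + 1 - B * C) ^ 2 - 4 * B = (φ G) ^ 2 := by
    have := congrArg φ hD
    simpa [map_sub, map_add, map_mul, map_pow, map_one, map_ofNat, hφA, hφB] using this
  have hsq : (φ G) ^ 2 = (G / A) ^ 2 := by
    rw [div_pow, eq_div_iff (pow_ne_zero 2 hA0), ← hD2, ← hD]
    linear_combination (A * B * C - 2 * A * B - 2 * A + 1) * hABC
  rcases sq_eq_sq_iff_eq_or_eq_neg.mp hsq with h | h
  · rwa [hφ] at h
  · exfalso
    have h2 : φ (φ G) = G / (A * B) := by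
      rw [h, map_neg, map_div₀, h, hφA, neg_div, neg_neg, div_div]
    have h3 : φ (φ (φ G)) = -G := by
      rw [h2, map_div₀, map_mul, h, hφA, hφB]
      field_simp
      linear_combination hABC
    have h4 : φ (φ (φ G)) = G := by
      simp only [hφ, ← pow_mul]
      have : q * q * q = Fintype.card F := by rw [hcard]; ring
      rw [this, FiniteField.pow_card]
    have : (2 : F) * G = 0 := by rw [h4] at h3; linear_combination h3
    rcases mul_eq_zero.mp this with h5 | h5
    · exact Ring.two_ne_zero hchar h5
    · exact hG h5
end

section
/- Let A be a root in F_{q^3} of h_1(X) = X^{q+1} + X + 1. Then A = (1/A^q) · (1/A^{q^2}), and both 1/A^q and 1/A^{q^2} are roots of h_2(X) = X^{q+1} + X^q + 1. -/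
/-!
The Frobenius `x ↦ x ^ q` is a ring endomorphism, so with `A` also `B = A ^ q` and
`C = A ^ q ^ 2` are roots of `h₁`. Since `A ^ (q + 1) = A * B` and `B ^ (q + 1) = B * C`, the
equations `h₁(A) = 0` and `h₁(B) = 0` read `A * B + A + 1 = 0` and `B * C + B + 1 = 0`, whence
`A * B * C = A * (-B - 1) = 1`. Finally `h₂` is the reciprocal polynomial of `h₁`, so inversion
maps the roots of `h₁` to those of `h₂`.
-/

lemma pow_expChar_pow_root_of_root {R : Type*} [CommSemiring R] {p : ℕ} [ExpChar R p] (n : ℕ)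
    {x : R} (hx : x ^ (p ^ n + 1) + x + 1 = 0) :
    (x ^ p ^ n) ^ (p ^ n + 1) + x ^ p ^ n + 1 = 0 := by
  have h := congrArg (iterateFrobenius R p n) hx
  rw [map_add, map_add, map_pow, map_one, map_zero] at h
  simpa only [iterateFrobenius_def] using h

lemma inv_pow_succ_add_inv_pow_add_one_eq_zero {K : Type*} [Field K] {k : ℕ} {x : K}
    (hx : x ^ (k + 1) + x + 1 = 0) : x⁻¹ ^ (k + 1) + x⁻¹ ^ k + 1 = 0 := by
  have hx0 : x ≠ 0 := by
    rintro rfl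
    simp at hx
  rw [inv_pow, inv_pow, pow_succ]
  field_simp
  linear_combination hx

theorem stmt_13 (q : ℕ) (hq : IsPrimePow q)
    (F : Type) [Field F] [Fintype F] (hcard : Fintype.card F = q ^ 3)
    (A : F) (hA : A ^ (q + 1) + A + 1 = 0) :
    A = (A ^ q)⁻¹ * (A ^ (q ^ 2))⁻¹ ∧
    ((A ^ q)⁻¹) ^ (q + 1) + ((A ^ q)⁻¹) ^ q + 1 = 0 ∧
    ((A ^ (q ^ 2))⁻¹) ^ (q + 1) + ((A ^ (q ^ 2))⁻¹) ^ q + 1 = 0 := by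
  obtain ⟨p, n, hp, -, rfl⟩ := hq
  have : Fact p.Prime := ⟨hp.nat_prime⟩
  have : CharP F p := charP_of_card_eq_prime_pow (f := n * 3) (by rw [hcard, pow_mul])
  have : ExpChar F p := .prime hp.nat_prime
  have hB := pow_expChar_pow_root_of_root n hA
  have hC : (A ^ (p ^ n) ^ 2) ^ (p ^ n + 1) + A ^ (p ^ n) ^ 2 + 1 = 0 := by
    simpa only [← pow_mul, ← sq] using pow_expChar_pow_root_of_root n hB
  have hABC : A * (A ^ p ^ n * A ^ (p ^ n) ^ 2) = 1 := by
    linear_combination A * hB - hA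
  refine ⟨?_, inv_pow_succ_add_inv_pow_add_one_eq_zero hB,
    inv_pow_succ_add_inv_pow_add_one_eq_zero hC⟩
  rw [← mul_inv]
  exact eq_inv_of_mul_eq_one_left hABC
end

section
/- Let A ∈ F_{q^3} with N(A) = 1 and A ≠ 1. An element Y ∈ F_{q^3} satisfies the system N(Y) = 1, N(Y+1) = −1, N(Y+A) = −1 if and only if both Y and A/Y are roots of h_1(X)·h_2(X) = (X^{q+1} + X + 1)(X^{q+1} + X^q + 1). -/
theorem aux_field_stmt14 (F : Type) [Field F] (q : ℕ) (hq0 : q ≠ 0) (σ : F →+* F)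
    (hσ : ∀ x : F, σ x = x ^ q) (hσ3 : ∀ x : F, σ (σ (σ x)) = x) (x : F) :
    (x ^ (q + 1) + x + 1) * (x ^ (q + 1) + x ^ q + 1) = 0 ↔
      (x ^ (1 + q + q ^ 2) = 1 ∧ (x + 1) ^ (1 + q + q ^ 2) = -1) := by
  have hb : x ^ q = σ x := (hσ x).symm
  have hsq : ∀ y : F, y ^ q ^ 2 = σ (σ y) := by
    intro y
    rw [hσ, hσ, ← pow_mul, pow_two]
  have hp1 : x ^ (q + 1) = x ^ q * x := pow_succ x q
  have hNx : x ^ (1 + q + q ^ 2) = x * σ x * σ (σ x) := by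
    rw [pow_add, pow_add, pow_one, hb, hsq]
  have hNx1 : (x + 1) ^ (1 + q + q ^ 2) = (x + 1) * (σ x + 1) * (σ (σ x) + 1) := by
    rw [pow_add, pow_add, pow_one, ← hσ, hsq]
    simp only [map_add, map_one]
  rw [hp1, hb, hNx, hNx1]
  constructor
  · intro h
    rcases mul_eq_zero.mp h with hu | hv
    · -- hu : σ x * x + x + 1 = 0
      have hu2 : σ (σ x) * σ x + σ x + 1 = 0 := by
        have h' := congrArg σ hu
        simpa only [map_add, map_mul, map_one, map_zero] using h'
      have hu3 : x * σ (σ x) + σ (σ x) + 1 = 0 := by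
        have h' := congrArg σ hu2
        simpa only [map_add, map_mul, map_one, map_zero, hσ3] using h'
      constructor
      · linear_combination x * hu2 - hu
      · linear_combination (x + 1) * hu2 + hu3
    · -- hv : σ x * x + σ x + 1 = 0
      have hv2 : σ (σ x) * σ x + σ (σ x) + 1 = 0 := by
        have h' := congrArg σ hv
        simpa only [map_add, map_mul, map_one, map_zero] using h'
      have hv3 : x * σ (σ x) + x + 1 = 0 := by
        have h' := congrArg σ hv2
        simpa only [map_add, map_mul, map_one, map_zero, hσ3] using h'
      constructor
      · linear_combination x * hv2 - hv3
      · linear_combination hv + (x + 1) * hv2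
  · rintro ⟨h1, h2⟩
    have hx0 : x ≠ 0 := by
      rintro rfl
      rw [zero_mul, zero_mul] at h1
      exact zero_ne_one h1
    have hc0 : σ (σ x) ≠ 0 := by
      intro h
      apply hx0
      rw [← hσ3 x, h, map_zero]
    have key : σ (σ x) ^ 2 * ((σ x * x + x + 1) * (σ x * x + σ x + 1)) = 0 := by
      linear_combination (x * σ x * σ (σ x) + x * σ (σ x) + σ x * σ (σ x) + 2 * σ (σ x)) * h1 +
        σ (σ x) * h2
    rcases mul_eq_zero.mp key with h | h
    · exact absurd h (pow_ne_zero _ hc0)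
    · exact h

theorem stmt_14 (q : ℕ) (hq : IsPrimePow q)
    (F : Type) [Field F] [Fintype F] (hcard : Fintype.card F = q ^ 3)
    (A : F) (hA : A ^ (1 + q + q ^ 2) = 1) (hAne : A ≠ 1) (Y : F) :
    (Y ^ (1 + q + q ^ 2) = 1 ∧ (Y + 1) ^ (1 + q + q ^ 2) = -1 ∧
        (Y + A) ^ (1 + q + q ^ 2) = -1) ↔
      ((Y ^ (q + 1) + Y + 1) * (Y ^ (q + 1) + Y ^ q + 1) = 0 ∧
        ((A / Y) ^ (q + 1) + A / Y + 1) * ((A / Y) ^ (q + 1) + (A / Y) ^ q + 1) = 0) := by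
  obtain ⟨p, k, hpp, hk0, hpk⟩ := hq
  have hpprime : p.Prime := Nat.prime_iff.mpr hpp
  haveI : Fact p.Prime := ⟨hpprime⟩
  have hq0 : q ≠ 0 := by
    rw [← hpk]; exact pow_ne_zero _ hpprime.pos.ne'
  -- characteristic of F is p
  haveI hcharF : CharP F p := by
    obtain ⟨p', hp'⟩ := CharP.exists F
    haveI := hp'
    have hp'prime : p'.Prime := CharP.char_is_prime F p'
    obtain ⟨n, _, hn⟩ := FiniteField.card F p'
    have heq : p ^ (3 * k) = p' ^ (n : ℕ) := by
      rw [mul_comm, pow_mul, hpk, ← hcard, hn]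
    have hdvd : p ∣ p' ^ (n : ℕ) := by
      rw [← heq]
      exact dvd_pow_self p (by omega)
    have : p = p' := by
      have := hpprime.dvd_of_dvd_pow hdvd
      exact ((Nat.prime_dvd_prime_iff_eq hpprime hp'prime).mp this)
    rwa [this]
  set σ : F →+* F := iterateFrobenius F p k with hσdef
  have hσ : ∀ x : F, σ x = x ^ q := by
    intro x
    rw [hσdef, iterateFrobenius_def, hpk]
  have hq3 : ∀ x : F, x ^ q ^ 3 = x := by
    intro x
    rw [← hcard]
    exact FiniteField.pow_card x
  have hσ3 : ∀ x : F, σ (σ (σ x)) = x := by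
    intro x
    rw [hσ, hσ, hσ, ← pow_mul, ← pow_mul, show q * (q * q) = q ^ 3 by ring]
    exact hq3 x
  have main := aux_field_stmt14 F q hq0 σ hσ hσ3
  rw [main Y, main (A / Y)]
  have he0 : 1 + q + q ^ 2 ≠ 0 := by positivity
  constructor
  · rintro ⟨h1, h2, h3⟩
    have hY0 : Y ≠ 0 := by
      rintro rfl
      rw [zero_pow he0] at h1
      exact zero_ne_one h1
    refine ⟨⟨h1, h2⟩, ?_, ?_⟩
    · rw [div_pow, hA, h1, div_one]
    · have h5 : A / Y + 1 = (Y + A) / Y := by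
        field_simp; ring
      rw [h5, div_pow, h3, h1, div_one]
  · rintro ⟨⟨h1, h2⟩, _, h4⟩
    refine ⟨h1, h2, ?_⟩
    have hY0 : Y ≠ 0 := by
      rintro rfl
      rw [zero_pow he0] at h1
      exact zero_ne_one h1
    have h5 : A / Y + 1 = (Y + A) / Y := by
      field_simp; ring
    rw [h5, div_pow, h1, div_one] at h4
    exact h4
end

section
/- Let q > 2 be a prime power with q ≡ 2 (mod 3). Then there exists A in the group N of norm-1 elements of F_{q^3}^*, A ≠ 1, such that A = B_1·C_1 = B_2·C_2 where B_1 ≠ C_1 are distinct roots of h_1(X) = X^{q+1} + X + 1 and B_2 ≠ C_2 are distinct roots of h_2(X) = X^{q+1} + X^q + 1. -/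
/-!
The Frobenius `x ↦ x ^ q` maps a root `B` of `h₁` to the root `B ^ q = -1 - 1 / B`, so the roots
of `h₁` come in orbits `B, B ^ q, B ^ q²` with product `1`: they lie in `N`, and their inverses
are the roots of `h₂`. Hence it suffices to find roots `X₁ ≠ X₂` and `X₃ ≠ X₄` of `h₁` with
`X₁ X₂ X₃ X₄ = 1 ≠ X₁ X₂`, and to take `A = X₁ X₂ = X₃⁻¹ X₄⁻¹`.

In odd characteristic, for every root `B` also `C = -(B + 2) / (2B + 1)` and `D = B C` are roots;
take `D ^ q, D ^ q², B, C`. In characteristic `2` squaring permutes the roots; take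
`B, (B ^ q²)², B, (B ^ q)²`, which works unless `B` is a root of `(X³ + X + 1)(X³ + X² + 1)`.
Such a `B` exists because `h₁` has at least `q + 1 > 6` roots: the kernel of the trace contains
the image of `v ↦ v - v ^ q`, of size at least `q²`, and `u ↦ u ^ (q - 1)` maps its nonzero
elements to roots of `h₁` with fibres of size at most `q - 1`.
-/

open Polynomial Finset

abbrev IsRootH₁ {F : Type*} [Field F] (q : ℕ) (x : F) : Prop := x ^ (q + 1) + x + 1 = 0

abbrev IsRootH₂ {F : Type*} [Field F] (q : ℕ) (x : F) : Prop := x ^ (q + 1) + x ^ q + 1 = 0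

def ExistsCommonProductOfRoots (q : ℕ) (F : Type*) [Field F] : Prop :=
  ∃ A B₁ C₁ B₂ C₂ : F, A ^ (1 + q + q ^ 2) = 1 ∧ A ≠ 1 ∧
    B₁ ≠ C₁ ∧ IsRootH₁ q B₁ ∧ IsRootH₁ q C₁ ∧ A = B₁ * C₁ ∧
    B₂ ≠ C₂ ∧ IsRootH₂ q B₂ ∧ IsRootH₂ q C₂ ∧ A = B₂ * C₂

theorem sq_add_self_add_one_ne_zero_of_card_mod_three {F : Type*} [Field F] [Fintype F]
    (h : Fintype.card F % 3 = 2) (x : F) : x ^ 2 + x + 1 ≠ 0 := by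
  intro hx
  obtain ⟨m, hm⟩ : ∃ m, Fintype.card F = 3 * m + 2 := ⟨Fintype.card F / 3, by omega⟩
  have hx1 : x ≠ 1 := by
    rintro rfl
    have hcard := FiniteField.cast_card_eq_zero F
    rw [hm] at hcard
    push_cast at hcard
    exact one_ne_zero (α := F) (by linear_combination (1 + (m : F)) * hx - hcard)
  have hx0 : x ≠ 0 := by rintro rfl; norm_num at hx
  have horder : orderOf x = 3 := orderOf_eq_prime (by linear_combination (x - 1) * hx) hx1
  have hdvd : orderOf x ∣ Fintype.card F - 1 :=
    orderOf_dvd_of_pow_eq_one (FiniteField.pow_card_sub_one_eq_one x hx0)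
  rw [horder, hm] at hdvd
  omega

namespace IsRootH₁

variable {F : Type*} [Field F] {q : ℕ} {σ : F →+* F} {B C : F}

theorem pow_mul_self (hB : IsRootH₁ q B) : B ^ q * B = -(B + 1) := by
  rw [← pow_succ]; linear_combination hB

theorem ne_zero (hB : IsRootH₁ q B) : B ≠ 0 := by
  rintro rfl; simp [IsRootH₁] at hB

theorem pow (hσ : ∀ x, σ x = x ^ q) (hB : IsRootH₁ q B) : IsRootH₁ q (B ^ q) := by
  have h := congrArg σ hB
  rwa [map_add, map_add, map_pow, map_one, map_zero, hσ] at h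

theorem mul_pow_mul_pow_pow_eq_one (hσ : ∀ x, σ x = x ^ q) (hB : IsRootH₁ q B) :
    B * B ^ q * (B ^ q) ^ q = 1 := by
  linear_combination B * (hB.pow hσ).pow_mul_self - hB.pow_mul_self

theorem norm_eq_one (hσ : ∀ x, σ x = x ^ q) (hB : IsRootH₁ q B) : B ^ (1 + q + q ^ 2) = 1 := by
  rw [pow_add, pow_add, pow_one, sq, pow_mul, hB.mul_pow_mul_pow_pow_eq_one hσ]

theorem isRootH₂_inv (hB : IsRootH₁ q B) : IsRootH₂ q B⁻¹ := by
  have := hB.ne_zero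
  rw [IsRootH₂, inv_pow, inv_pow, pow_succ]
  field_simp
  linear_combination hB

theorem pow_ne_self (hF : ∀ x : F, x ^ 2 + x + 1 ≠ 0) (hB : IsRootH₁ q B) : B ^ q ≠ B := by
  intro h
  exact hF B (by linear_combination hB - B * h)

theorem mul (hB : IsRootH₁ q B) (hC : IsRootH₁ q C) (h : 2 * B * C + B + C + 2 = 0) :
    IsRootH₁ q (B * C) := by
  unfold IsRootH₁
  linear_combination (B ^ q * B) * hC.pow_mul_self - (C + 1) * hB.pow_mul_self + h

end IsRootH₁

theorem isRootH₁_pow_sub_one_of_trace_eq_zero {F : Type*} [Field F] {q : ℕ} (hq : 1 ≤ q) {u : F}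
    (hu : u ≠ 0) (htr : u + u ^ q + (u ^ q) ^ q = 0) : IsRootH₁ q (u ^ (q - 1)) := by
  obtain ⟨r, rfl⟩ : ∃ r, q = r + 1 := ⟨q - 1, by omega⟩
  rw [Nat.add_sub_cancel]
  refine (mul_eq_zero.mp ?_).resolve_right hu
  linear_combination htr

section Counting

variable {F : Type*} [Field F] [Fintype F] [DecidableEq F]

theorem card_filter_pow_eq_le {n : ℕ} (hn : 0 < n) (c : F) : #{x : F | x ^ n = c} ≤ n := by
  calc #{x : F | x ^ n = c} ≤ #(nthRoots n c).toFinset :=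
        card_le_card fun x hx ↦ by simpa [mem_nthRoots hn] using hx
    _ ≤ Multiset.card (nthRoots n c) := Multiset.toFinset_card_le _
    _ ≤ n := card_nthRoots n c

theorem card_filter_pow_eq_self_le {q : ℕ} (hq : 1 < q) : #{x : F | x ^ q = x} ≤ q := by
  calc #{x : F | x ^ q = x} ≤ #(insert 0 ({x : F | x ^ (q - 1) = 1} : Finset F)) := by
        refine card_le_card fun x hx ↦ ?_
        rw [mem_filter] at hx
        rw [mem_insert, mem_filter]
        refine or_iff_not_imp_left.mpr fun hx0 ↦ ⟨mem_univ x, ?_⟩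
        rw [← mul_left_inj' hx0, ← pow_succ, Nat.sub_add_cancel hq.le, one_mul, hx.2]
    _ ≤ #{x : F | x ^ (q - 1) = 1} + 1 := card_insert_le _ _
    _ ≤ q := by have := card_filter_pow_eq_le (F := F) (n := q - 1) (by omega) 1; omega

variable {q : ℕ} {σ : F →+* F}

theorem sq_le_card_filter_trace_eq_zero (hσ : ∀ x, σ x = x ^ q) (hq : 1 < q)
    (hcard : Fintype.card F = q ^ 3) : q ^ 2 ≤ #{u : F | u + u ^ q + (u ^ q) ^ q = 0} := by
  have hfiber : ∀ a : F, #{v : F | v - v ^ q = a} ≤ q := by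
    intro a
    rcases eq_empty_or_nonempty {v : F | v - v ^ q = a} with he | ⟨v₀, hv₀⟩
    · simp [he]
    refine le_trans (card_le_card_of_injOn (· - v₀) ?_ sub_left_injective.injOn)
      (card_filter_pow_eq_self_le hq)
    intro v hv
    simp only [coe_filter, mem_filter, mem_univ, true_and, Set.mem_ofPred_eq] at hv hv₀ ⊢
    rw [← hσ, map_sub, hσ, hσ]
    linear_combination hv₀ - hv
  have himage : univ.image (fun v : F ↦ v - v ^ q) ⊆
      ({u : F | u + u ^ q + (u ^ q) ^ q = 0} : Finset F) := by
    intro u hu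
    obtain ⟨v, -, rfl⟩ := mem_image.mp hu
    have hv : ((v ^ q) ^ q) ^ q = v := by
      rw [← pow_mul, ← pow_mul, show q * (q * q) = q ^ 3 by ring, ← hcard, FiniteField.pow_card]
    simp only [mem_filter, mem_univ, true_and]
    simp only [← hσ, map_sub] at hv ⊢
    linear_combination -hv
  have := card_le_mul_card_image univ q fun a _ ↦ by simpa using hfiber a
  rw [card_univ, hcard] at this
  refine Nat.le_of_mul_le_mul_left ?_ (by omega : 0 < q)
  calc q * q ^ 2 = q ^ 3 := by ring
    _ ≤ _ := this.trans (Nat.mul_le_mul_left q (card_le_card himage))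

theorem add_one_le_card_isRootH₁ (hσ : ∀ x, σ x = x ^ q) (hq : 1 < q)
    (hcard : Fintype.card F = q ^ 3) : q + 1 ≤ #{B : F | IsRootH₁ q B} := by
  set Z : Finset F := {u : F | u + u ^ q + (u ^ q) ^ q = 0}
  have hmaps : ∀ u ∈ Z.erase 0, u ^ (q - 1) ∈ ({B : F | IsRootH₁ q B} : Finset F) := by
    intro u hu
    rw [mem_erase, mem_filter] at hu
    simpa using isRootH₁_pow_sub_one_of_trace_eq_zero hq.le hu.1 hu.2.2
  have hfiber : ∀ B ∈ ({B : F | IsRootH₁ q B} : Finset F),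
      #{u ∈ Z.erase 0 | u ^ (q - 1) = B} ≤ q - 1 := fun B _ ↦
    (card_le_card (filter_subset_filter _ (subset_univ _))).trans
      (card_filter_pow_eq_le (by omega) B)
  have h := card_le_mul_card_image_of_maps_to hmaps (q - 1) hfiber
  have hZ : q ^ 2 ≤ #Z := sq_le_card_filter_trace_eq_zero hσ hq hcard
  rw [card_erase_of_mem (by simp [Z, zero_pow (by omega : q ≠ 0)])] at h
  obtain ⟨r, rfl⟩ : ∃ r, q = r + 2 := ⟨q - 2, by omega⟩
  rw [show r + 2 - 1 = r + 1 by omega] at h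
  have : (r + 2) ^ 2 ≤ (r + 1) * #{B : F | IsRootH₁ (r + 2) B} + 1 := by omega
  nlinarith

theorem exists_isRootH₁_eval_ne_zero (hσ : ∀ x, σ x = x ^ q) (hq : 1 < q)
    (hcard : Fintype.card F = q ^ 3) {P : F[X]} (hP : P ≠ 0) (hdeg : P.natDegree ≤ q) :
    ∃ B, IsRootH₁ q B ∧ P.eval B ≠ 0 := by
  by_contra! h
  have hsub : ({B : F | IsRootH₁ q B} : Finset F).val ⊆ P.roots := fun B hB ↦ by
    simp only [mem_val, mem_filter, mem_univ, true_and] at hB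
    exact (mem_roots hP).mpr (h B hB)
  have := card_le_degree_of_subset_roots hsub
  have := add_one_le_card_isRootH₁ hσ hq hcard
  omega

end Counting

section Construction

variable {F : Type*} [Field F] {q : ℕ} {σ : F →+* F}

theorem existsCommonProductOfRoots_of_mul_eq_one (hσ : ∀ x, σ x = x ^ q) {X₁ X₂ X₃ X₄ : F}
    (h₁ : IsRootH₁ q X₁) (h₂ : IsRootH₁ q X₂) (h₃ : IsRootH₁ q X₃) (h₄ : IsRootH₁ q X₄)
    (h₁₂ : X₁ ≠ X₂) (h₃₄ : X₃ ≠ X₄) (hprod : X₁ * X₂ * (X₃ * X₄) = 1) (hA : X₁ * X₂ ≠ 1) :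
    ExistsCommonProductOfRoots q F :=
  ⟨X₁ * X₂, X₁, X₂, X₃⁻¹, X₄⁻¹, by rw [mul_pow, h₁.norm_eq_one hσ, h₂.norm_eq_one hσ, one_mul],
    hA, h₁₂, h₁, h₂, rfl, inv_injective.ne h₃₄, h₃.isRootH₂_inv, h₄.isRootH₂_inv,
    by rw [← mul_inv, eq_inv_of_mul_eq_one_left hprod]⟩

theorem IsRootH₁.of_two_mul_add_one_mul_eq (hσ : ∀ x, σ x = x ^ q) {B C : F}
    (hB : IsRootH₁ q B) (hC : (2 * B + 1) * C = -(B + 2)) (hB₂ : B + 2 ≠ 0) : IsRootH₁ q C := by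
  have hB₁₂ : 2 * B + 1 ≠ 0 := fun h ↦ hB₂ <| by rw [h, zero_mul] at hC; linear_combination hC
  have hCq : (2 * B ^ q + 1) * C ^ q = -(B ^ q + 2) := by
    have h := congrArg σ hC
    simp only [map_mul, map_add, map_neg, map_ofNat, map_one] at h
    simpa only [hσ] using h
  have h : (B + 2) * C ^ q = B - 1 := by
    linear_combination -B * hCq + (2 * C ^ q + 1) * hB.pow_mul_self
  refine (mul_eq_zero.mp ?_).resolve_left (mul_ne_zero hB₂ hB₁₂)
  rw [pow_succ]
  linear_combination ((2 * B + 1) * C) * h + (2 * B + 1) * hC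

theorem existsCommonProductOfRoots_of_two_ne_zero (hσ : ∀ x, σ x = x ^ q)
    (hF : ∀ x : F, x ^ 2 + x + 1 ≠ 0) (h2 : (2 : F) ≠ 0) {B : F} (hB : IsRootH₁ q B) :
    ExistsCommonProductOfRoots q F := by
  -- `-2` and `-1 / 2` are fixed by the Frobenius, while no root of `h₁` is
  have hB₂ : B + 2 ≠ 0 := fun h ↦ hB.pow_ne_self hF <| by
    rw [show B = -2 by linear_combination h, ← hσ, map_neg, map_ofNat]
  have hB₁₂ : 2 * B + 1 ≠ 0 := fun h ↦ hB.pow_ne_self hF <| by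
    rw [show B = -2⁻¹ by field_simp; linear_combination h, ← hσ, map_neg, map_inv₀, map_ofNat]
  set C := -(B + 2) / (2 * B + 1)
  have hBC : (2 * B + 1) * C = -(B + 2) := mul_div_cancel₀ _ hB₁₂
  have hC : IsRootH₁ q C := hB.of_two_mul_add_one_mul_eq hσ hBC hB₂
  have hD := hB.mul hC (by linear_combination hBC)
  have hDq := hD.pow hσ
  refine existsCommonProductOfRoots_of_mul_eq_one hσ hDq (hDq.pow hσ) hB hC
    (hDq.pow_ne_self hF).symm ?_ ?_ ?_
  · refine fun h ↦ hF B ((mul_eq_zero.mp ?_).resolve_left h2)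
    rw [← h] at hBC
    linear_combination hBC
  · linear_combination hD.mul_pow_mul_pow_pow_eq_one hσ
  · intro h
    have hD1 : B * C = 1 := by linear_combination hD.mul_pow_mul_pow_pow_eq_one hσ - B * C * h
    have h1 := hD
    rw [hD1, IsRootH₁, one_pow] at h1
    exact hF 1 (by linear_combination h1)

theorem IsRootH₁.sq [CharP F 2] {B : F} (hB : IsRootH₁ q B) : IsRootH₁ q (B ^ 2) := by
  calc (B ^ 2) ^ (q + 1) + B ^ 2 + 1 = (B ^ (q + 1) + B + 1) ^ 2 := by
        rw [CharTwo.add_sq, CharTwo.add_sq, one_pow, ← pow_mul, ← pow_mul, mul_comm]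
    _ = 0 := by rw [hB, zero_pow two_ne_zero]

theorem existsCommonProductOfRoots_of_charTwo [CharP F 2] (hσ : ∀ x, σ x = x ^ q)
    (hF : ∀ x : F, x ^ 2 + x + 1 ≠ 0) {B : F} (hB : IsRootH₁ q B) (hB₁ : B ^ 3 + B + 1 ≠ 0)
    (hB₂ : B ^ 3 + B ^ 2 + 1 ≠ 0) : ExistsCommonProductOfRoots q F := by
  have h2 : (2 : F) = 0 := CharTwo.two_eq_zero
  have hB' := hB.pow hσ
  have hnorm := hB.mul_pow_mul_pow_pow_eq_one hσ
  have hBq := hB.pow_mul_self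
  have hBq' : (B + 1) * (B ^ q) ^ q = -1 := by linear_combination -hnorm + (B ^ q) ^ q * hBq
  refine existsCommonProductOfRoots_of_mul_eq_one hσ hB (hB'.pow hσ).sq hB hB'.sq ?_ ?_ ?_ ?_
  · intro h
    apply hB₁
    linear_combination (B + 1) ^ 2 * h + ((B + 1) * (B ^ q) ^ q - 1) * hBq' + (1 - B ^ 2) * h2
  · intro h
    apply hB₂
    linear_combination B ^ 2 * h + (B ^ q * B - (B + 1)) * hBq + (B ^ 2 + B + 1) * h2
  · linear_combination (B * B ^ q * (B ^ q) ^ q + 1) * hnorm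
  · intro h
    apply hF B
    linear_combination -(B + 1) ^ 2 * h + B * ((B + 1) * (B ^ q) ^ q - 1) * hBq'

end Construction

theorem stmt_16 (q : ℕ) (hq : IsPrimePow q) (hq2 : 2 < q) (hq3 : q % 3 = 2)
    (F : Type) [Field F] [Fintype F] (hcard : Fintype.card F = q ^ 3) :
    ∃ A B₁ C₁ B₂ C₂ : F,
      A ^ (1 + q + q ^ 2) = 1 ∧ A ≠ 1 ∧
      B₁ ≠ C₁ ∧ B₁ ^ (q + 1) + B₁ + 1 = 0 ∧ C₁ ^ (q + 1) + C₁ + 1 = 0 ∧ A = B₁ * C₁ ∧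
      B₂ ≠ C₂ ∧ B₂ ^ (q + 1) + B₂ ^ q + 1 = 0 ∧ C₂ ^ (q + 1) + C₂ ^ q + 1 = 0 ∧
      A = B₂ * C₂ := by
  classical
  obtain ⟨p, k, hp, hk, rfl⟩ := hq
  have hp : p.Prime := Nat.prime_iff.mpr hp
  have : Fact p.Prime := ⟨hp⟩
  have : CharP F p := charP_of_card_eq_prime_pow (f := k * 3) (by rw [hcard, pow_mul])
  have hσ : ∀ x : F, iterateFrobenius F p k x = x ^ p ^ k := fun x ↦ iterateFrobenius_def ..
  have hF := sq_add_self_add_one_ne_zero_of_card_mod_three (F := F)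
    (by rw [hcard, Nat.pow_mod, hq3])
  by_cases hp2 : p = 2
  · subst hp2
    have : 2 ∣ 2 ^ k := dvd_pow_self 2 hk.ne'
    obtain ⟨B, hB, hBP⟩ := exists_isRootH₁_eval_ne_zero hσ (by omega) hcard
      (P := (X ^ 3 + X + 1) * (X ^ 3 + X ^ 2 + 1)) (Monic.ne_zero (by monicity!))
      ((by compute_degree : _ ≤ 6).trans (by omega))
    simp only [eval_mul, eval_add, eval_pow, eval_X, eval_one, ne_eq, mul_eq_zero, not_or] at hBP
    exact existsCommonProductOfRoots_of_charTwo hσ hF hB hBP.1 hBP.2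
  · have h2 : (2 : F) ≠ 0 := fun h ↦ hp2 <| (Nat.prime_dvd_prime_iff_eq hp Nat.prime_two).mp
      ((CharP.cast_eq_zero_iff F p 2).mp (by exact_mod_cast h))
    obtain ⟨B, hB⟩ := card_pos.mp ((Nat.succ_pos _).trans_le
      (add_one_le_card_isRootH₁ hσ (by omega) hcard))
    exact existsCommonProductOfRoots_of_two_ne_zero hσ hF h2 (mem_filter.mp hB).2
end

section
/- Let C ∈ F_{q^3} be a root of h_1(X) = X^{q+1} + X + 1 or of h_2(X) = X^{q+1} + X^q + 1, with C ∉ F_q, and let t = C + C^q + C^{q^2} be its trace. Then the minimal polynomial of C over F_q is X^3 − t·X^2 − (t+3)·X − 1. In particular, N(C^2+C+1) = t^2+3t+9, N(C^2+C−1) = t^2+3t+1, and N(C^2−C−1) = −t^2−3t−1. -/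
open Polynomial in
theorem stmt_17 (q : ℕ) (hq : IsPrimePow q)
    (F : Type) [Field F] [Fintype F] (hcard : Fintype.card F = q ^ 3)
    (c : F) (hroot : c ^ (q + 1) + c + 1 = 0 ∨ c ^ (q + 1) + c ^ q + 1 = 0)
    (hnotin : c ^ q ≠ c) (t : F) (ht : t = c + c ^ q + c ^ (q ^ 2)) :
    ((X - C c) * (X - C (c ^ q)) * (X - C (c ^ (q ^ 2))) : F[X])
        = X ^ 3 - C t * X ^ 2 - C (t + 3) * X - 1 ∧
    (c ^ 2 + c + 1) ^ (1 + q + q ^ 2) = t ^ 2 + 3 * t + 9 ∧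
    (c ^ 2 + c - 1) ^ (1 + q + q ^ 2) = t ^ 2 + 3 * t + 1 ∧
    (c ^ 2 - c - 1) ^ (1 + q + q ^ 2) = -t ^ 2 - 3 * t - 1 := by
  -- Set up the characteristic
  obtain ⟨p, n, hp, hn, rfl⟩ := hq
  haveI hpF : Fact p.Prime := ⟨hp.nat_prime⟩
  have hchar : CharP F p := by
    obtain ⟨r, hr⟩ := CharP.exists F
    haveI := hr
    obtain ⟨m, hrp, hcard'⟩ := FiniteField.card F r
    haveI : Fact r.Prime := ⟨hrp⟩
    have hpr : p = r := by
      have h1 : p ∣ r ^ (m : ℕ) := by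
        rw [← hcard', hcard, ← pow_mul]
        exact dvd_pow_self p (by positivity)
      have := hp.nat_prime.dvd_of_dvd_pow h1
      exact ((Nat.prime_dvd_prime_iff_eq hp.nat_prime hrp).mp this)
    rwa [hpr]
  haveI := hchar
  set q := p ^ n with hqdef
  have hq0 : q ≠ 0 := pow_ne_zero n hp.ne_zero
  -- Frobenius facts
  have hadd : ∀ x y : F, (x + y) ^ q = x ^ q + y ^ q := fun x y => add_pow_char_pow x y p n
  have hsub : ∀ x y : F, (x - y) ^ q = x ^ q - y ^ q := fun x y => sub_pow_char_pow x y n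
  have hone : (1 : F) ^ q = 1 := one_pow q
  have powz : (0 : F) ^ q = 0 := zero_pow hq0
  set b := c ^ q with hb
  set d := c ^ q ^ 2 with hd
  have hbq : b ^ q = d := by rw [hb, hd, ← pow_mul, sq]
  have hdq : d ^ q = c := by
    rw [hd, ← pow_mul, show q ^ 2 * q = q ^ 3 by ring, ← hcard]
    exact FiniteField.pow_card c
  -- Derive the three relations (symmetrically in both cases)
  have hrel : (b * c + c + 1 = 0 ∧ d * b + b + 1 = 0 ∧ c * d + d + 1 = 0) ∨
      (b * c + b + 1 = 0 ∧ d * b + d + 1 = 0 ∧ c * d + c + 1 = 0) := by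
    have hc1 : c ^ (q + 1) = b * c := by rw [pow_succ, hb]
    rcases hroot with h | h
    · left
      rw [hc1] at h
      have h2 : d * b + b + 1 = 0 := by
        have h' := congrArg (· ^ q) h
        simp only [hadd, hone, powz, mul_pow, hbq, ← hb] at h'
        exact h'
      refine ⟨h, h2, ?_⟩
      have h' := congrArg (· ^ q) h2
      simp only [hadd, hone, powz, mul_pow, hbq, hdq, ← hb] at h'
      linear_combination h'
    · right
      rw [hc1] at h
      have h2 : d * b + d + 1 = 0 := by
        have h' := congrArg (· ^ q) h
        simp only [hadd, hone, powz, mul_pow, hbq, ← hb] at h'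
        exact h'
      refine ⟨h, h2, ?_⟩
      have h' := congrArg (· ^ q) h2
      simp only [hadd, hone, powz, mul_pow, hbq, hdq, ← hb] at h'
      linear_combination h'
  -- elementary symmetric values
  have he2 : c * b + b * d + d * c = -(t + 3) := by
    rcases hrel with ⟨h1, h2, h3⟩ | ⟨h1, h2, h3⟩ <;> rw [ht] <;>
      linear_combination h1 + h2 + h3
  have he3 : c * b * d = 1 := by
    rcases hrel with ⟨h1, h2, h3⟩ | ⟨h1, h2, h3⟩
    · linear_combination c * h2 - h1
    · linear_combination b * h3 - h1
  subst ht
  refine ⟨?_, ?_, ?_, ?_⟩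
  · have expand : ((X - C c) * (X - C b) * (X - C d) : F[X])
        = X ^ 3 - C (c + b + d) * X ^ 2 + C (c * b + b * d + d * c) * X - C (c * b * d) := by
      simp only [map_add, map_mul]
      ring
    rw [expand, he2, he3]
    simp only [map_neg, map_add, map_one, map_ofNat]
    ring
  · have frob1 : (c ^ 2 + c + 1) ^ q = b ^ 2 + b + 1 := by
      simp only [hadd, hone, ← pow_mul]
      rw [mul_comm 2 q, pow_mul, ← hb]
    have frob2 : (b ^ 2 + b + 1) ^ q = d ^ 2 + d + 1 := by
      simp only [hadd, hone, ← pow_mul]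
      rw [mul_comm 2 q, pow_mul, hbq]
    have key : (c ^ 2 + c + 1) ^ (1 + q + q ^ 2)
        = (c ^ 2 + c + 1) * (b ^ 2 + b + 1) * (d ^ 2 + d + 1) := by
      rw [pow_add, pow_add, pow_one, sq q, pow_mul, frob1, frob2]
    rw [key]
    linear_combination (c * b + b * d + d * c + c * b * d - 4) * he2 +
      (c * b * d - 2 * (c + b + d) - 4) * he3
  · have frob1 : (c ^ 2 + c - 1) ^ q = b ^ 2 + b - 1 := by
      rw [hsub, hadd, hone, ← pow_mul, mul_comm 2 q, pow_mul, ← hb]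
    have frob2 : (b ^ 2 + b - 1) ^ q = d ^ 2 + d - 1 := by
      rw [hsub, hadd, hone, ← pow_mul, mul_comm 2 q, pow_mul, hbq]
    have key : (c ^ 2 + c - 1) ^ (1 + q + q ^ 2)
        = (c ^ 2 + c - 1) * (b ^ 2 + b - 1) * (d ^ 2 + d - 1) := by
      rw [pow_add, pow_add, pow_one, sq q, pow_mul, frob1, frob2]
    rw [key]
    linear_combination (c * b * d - (c * b + b * d + d * c)) * he2 +
      (2 * (c + b + d) + c * b * d + 2) * he3
  · have frob1 : (c ^ 2 - c - 1) ^ q = b ^ 2 - b - 1 := by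
      rw [hsub, hsub, ← pow_mul, hone, mul_comm 2 q, pow_mul, ← hb]
    have frob2 : (b ^ 2 - b - 1) ^ q = d ^ 2 - d - 1 := by
      rw [hsub, hsub, ← pow_mul, hone, mul_comm 2 q, pow_mul, hbq]
    have key : (c ^ 2 - c - 1) ^ (1 + q + q ^ 2)
        = (c ^ 2 - c - 1) * (b ^ 2 - b - 1) * (d ^ 2 - d - 1) := by
      rw [pow_add, pow_add, pow_one, sq q, pow_mul, frob1, frob2]
    rw [key]
    linear_combination (2 * (c + b + d) - (c * b + b * d + d * c) - c * b * d) * he2 +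
      (4 * (c + b + d) + c * b * d) * he3
end

section
/- Let q be a prime power, t ≥ 3, and d_t(Y) = 1 + Y + Y^{1+q} + Y^{1+q+q^2} + ⋯ + Y^{1+q+⋯+q^{t-2}} over F_{q^t}. If A ∈ F_{q^t} satisfies d_t(A) = 0, then N(A) = 1, where N(A) = A^{(q^t−1)/(q−1)} is the norm from F_{q^t} to F_q. Moreover, the map Φ(Y) = Y^{q−1} sends any Y ∈ F_{q^t}^* with trace Tr(Y) = Y + Y^q + ⋯ + Y^{q^{t-1}} = 0 to a root of d_t, via the identity d_t(Y^{q−1}) = Tr(Y)/Y. -/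
theorem stmt_19 (q t : ℕ) (hq : IsPrimePow q) (ht : 3 ≤ t)
    (F : Type) [Field F] [Fintype F] (hcard : Fintype.card F = q ^ t) :
    (∀ A : F, (∑ j ∈ Finset.range t, A ^ ((q ^ j - 1) / (q - 1))) = 0 →
      A ^ ((q ^ t - 1) / (q - 1)) = 1) ∧
    (∀ Y : F, Y ≠ 0 →
      (∑ j ∈ Finset.range t, (Y ^ (q - 1)) ^ ((q ^ j - 1) / (q - 1)))
        = (∑ j ∈ Finset.range t, Y ^ (q ^ j)) / Y ∧
      ((∑ j ∈ Finset.range t, Y ^ (q ^ j)) = 0 →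
        (∑ j ∈ Finset.range t, (Y ^ (q - 1)) ^ ((q ^ j - 1) / (q - 1))) = 0)) := by
  obtain ⟨p, k, hp, hk, rfl⟩ := hq
  have hp' : p.Prime := hp.nat_prime
  have hq2 : 2 ≤ p ^ k := by
    calc 2 ≤ p := hp'.two_le
    _ ≤ p ^ k := Nat.le_self_pow hk.ne' p
  -- exponent rewriting
  have hE : ∀ j : ℕ, ((p ^ k) ^ j - 1) / (p ^ k - 1) = ∑ i ∈ Finset.range j, (p ^ k) ^ i :=
    fun j => (Nat.geomSum_eq hq2 j).symm
  -- characteristic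
  have hchar : CharP F p := by
    set p' := ringChar F with hp'def
    haveI : CharP F p' := ringChar.charP F
    have hp'p : p'.Prime := CharP.char_is_prime F p'
    obtain ⟨n, -, hcard'⟩ := FiniteField.card F p'
    have heq : p' ^ (n : ℕ) = p ^ (k * t) := by
      rw [← hcard', hcard, ← pow_mul]
    have : p = p' := by
      have hdvd : p ∣ p' ^ (n : ℕ) := by
        rw [heq]
        exact dvd_pow_self p (by positivity)
      exact ((Nat.prime_dvd_prime_iff_eq hp' hp'p).mp (hp'.dvd_of_dvd_pow hdvd))
    rw [this]; infer_instance
  haveI := hchar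
  haveI : Fact p.Prime := ⟨hp'⟩
  constructor
  · intro A hA
    set E := fun j : ℕ => ∑ i ∈ Finset.range j, (p ^ k) ^ i with hEdef
    have hA' : (∑ j ∈ Finset.range t, A ^ E j) = 0 := by
      rw [← hA]; exact Finset.sum_congr rfl fun j _ => by rw [hE j]
    -- A * s^q = s + A^(E t) - 1
    have key : A * (∑ j ∈ Finset.range t, A ^ E j) ^ p ^ k
        = (∑ j ∈ Finset.range t, A ^ E j) + A ^ E t - 1 := by
      have hsum_pow : (∑ j ∈ Finset.range t, A ^ E j) ^ p ^ k
          = ∑ j ∈ Finset.range t, (A ^ E j) ^ p ^ k := by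
        simp only [← iterateFrobenius_def p k]
        exact map_sum _ _ _
      rw [hsum_pow, Finset.mul_sum]
      have hterm : ∀ j, A * (A ^ E j) ^ p ^ k = A ^ E (j + 1) := by
        intro j
        rw [← pow_mul, ← pow_succ']
        congr 1
        rw [hEdef]
        simp [geom_sum_succ, Nat.mul_comm]
      rw [Finset.sum_congr rfl fun j _ => hterm j]
      have h2 : ∑ j ∈ Finset.range (t + 1), A ^ E j
          = ∑ j ∈ Finset.range t, A ^ E (j + 1) + A ^ E 0 := Finset.sum_range_succ' _ t
      have h3 : ∑ j ∈ Finset.range (t + 1), A ^ E j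
          = ∑ j ∈ Finset.range t, A ^ E j + A ^ E t := Finset.sum_range_succ _ t
      have hE0 : A ^ E 0 = 1 := by simp [hEdef]
      rw [hE0] at h2
      have := h2.symm.trans h3
      linear_combination this
    rw [hA'] at key
    have hz : (0 : F) ^ p ^ k = 0 := zero_pow (by positivity)
    rw [hz, mul_zero] at key
    have : A ^ E t = 1 := by linear_combination -key
    rw [hE t]; exact this
  · intro Y hY
    have hmain : (∑ j ∈ Finset.range t, (Y ^ (p ^ k - 1)) ^ (((p ^ k) ^ j - 1) / (p ^ k - 1)))
        = (∑ j ∈ Finset.range t, Y ^ (p ^ k) ^ j) / Y := by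
      rw [Finset.sum_div]
      refine Finset.sum_congr rfl fun j _ => ?_
      have hdvd : (p ^ k - 1) ∣ ((p ^ k) ^ j - 1) := by
        simpa using Nat.sub_dvd_pow_sub_pow (p ^ k) 1 j
      rw [← pow_mul, Nat.mul_div_cancel' hdvd]
      have h1 : 1 ≤ (p ^ k) ^ j := Nat.one_le_pow _ _ (by positivity)
      field_simp
      rw [← pow_succ, Nat.sub_add_cancel h1]
    exact ⟨hmain, fun h0 => by rw [hmain, h0, zero_div]⟩
end
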